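/- arXiv:2203.01925 — 5 statements merged into one kernel-verified Lean document; each statement's English description precedes it below -/
import Mathlib

section
/- Let M : ℝ^d → ℝ be an affine function, M(x) = ⟨g, x⟩ + b with g ≠ 0 (the margin of a linear classification model). Fix z ∈ ℝ^d with M(z) > 0 and δ ∈ (0,1). Then the cosine of the angle between the expected gradient estimator v(R) and g tends to 1 as R → ∞, i.e., the function R ↦ ⟨v(R), g⟩ / (‖v(R)‖·‖g‖) tends to 1 along the filter atTop (and v(R) ≠ 0 for all sufficiently large R). (Theorem 1, asymptotic unbiasedness of the direction estimator.) -/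
open MeasureTheory Metric Filter
open scoped RealInnerProductSpace

noncomputable section

/-- `Φ(x) = 0` if `M x > 0` (point classified into the target class), `-1` otherwise. -/
def Phi {d : ℕ} (M : EuclideanSpace ℝ (Fin d) → ℝ) (x : EuclideanSpace ℝ (Fin d)) : ℝ :=
  if 0 < M x then 0 else -1

/-- The expected gradient estimator `v(R) = ∫_{S^{d-1}} Φ(z + δR·u) · u dμ(u)`. -/
def gradEst {d : ℕ} (μ : Measure (EuclideanSpace ℝ (Fin d)))
    (M : EuclideanSpace ℝ (Fin d) → ℝ) (z : EuclideanSpace ℝ (Fin d)) (δ R : ℝ) :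
    EuclideanSpace ℝ (Fin d) :=
  ∫ u, Phi M (z + (δ * R) • u) • u ∂μ

/-! For affine `M`, `Φ(z + c • u)` depends on `u` only through `⟪g, u⟫`, so every reflection
in a hyperplane containing `g` commutes with the integrand and, by rotation invariance of `μ`,
fixes `v(R)`: hence `v(R)` is a multiple of `g`. Once `δ R ‖g‖ > M z`,
the integrand `Φ(z + δR • u) ⟪g, u⟫` of `⟪v(R), g⟫` is nonnegative, and positive on an open
neighbourhood of the unit vector `-g / ‖g‖`, which has positive measure because rotations act
transitively on the sphere. So the multiple is positive and the cosine equals `1` for large `R`. -/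

lemma inner_div_norm_mul_norm_eq_one_of_mem_span {E : Type*} [NormedAddCommGroup E]
    [InnerProductSpace ℝ E] {v g : E} (hv : v ∈ ℝ ∙ g)
    (hpos : 0 < ⟪v, g⟫) : ⟪v, g⟫ / (‖v‖ * ‖g‖) = 1 := by
  obtain ⟨a, rfl⟩ := Submodule.mem_span_singleton.mp hv
  rw [real_inner_smul_left] at hpos
  have ha : 0 < a := pos_of_mul_pos_left hpos real_inner_self_nonneg
  have hg : g ≠ 0 := fun h => by simp [h] at hpos
  rw [real_inner_div_norm_mul_norm_eq_one_iff]
  refine ⟨smul_ne_zero ha.ne' hg, a⁻¹, inv_pos.mpr ha, ?_⟩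
  rw [smul_smul, inv_mul_cancel₀ ha.ne', one_smul]

section RotationInvariant

variable {E : Type*} [NormedAddCommGroup E] [InnerProductSpace ℝ E]
  [MeasurableSpace E] [BorelSpace E] {μ : Measure E}

lemma measure_ball_eq_of_norm_eq (hrot : ∀ e : E ≃ₗᵢ[ℝ] E, μ.map e = μ) {x y : E}
    (hxy : ‖x‖ = ‖y‖) (r : ℝ) : μ (ball x r) = μ (ball y r) := by
  set e := (ℝ ∙ (x - y))ᗮ.reflection
  have hex : e x = y := Submodule.reflection_sub hxy
  have hpre : e ⁻¹' ball y r = ball x r := by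
    ext u
    rw [Set.mem_preimage, mem_ball, mem_ball, ← hex, e.dist_map]
  rw [← hpre, ← Measure.map_apply e.continuous.measurable measurableSet_ball, hrot]

lemma measure_pos_of_isOpen_of_mem_sphere [FiniteDimensional ℝ E] [NeZero μ]
    (hsupp : μ (sphere (0 : E) 1)ᶜ = 0) (hrot : ∀ e : E ≃ₗᵢ[ℝ] E, μ.map e = μ)
    {U : Set E} (hU : IsOpen U) {x : E} (hxU : x ∈ U) (hx : ‖x‖ = 1) : 0 < μ U := by
  obtain ⟨r, hr, hball⟩ := Metric.isOpen_iff.mp hU x hxU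
  refine (pos_iff_ne_zero.mpr fun h => ?_).trans_le (measure_mono hball)
  obtain ⟨t, hts, htf, hcover⟩ := (isCompact_sphere (0 : E) 1).elim_finite_subcover_image
    (fun _ _ => isOpen_ball) fun u hu => Set.mem_biUnion hu (mem_ball_self hr)
  have hnull : μ (⋃ y ∈ t, ball y r) = 0 := (measure_biUnion_null_iff htf.countable).mpr
    fun y hy => by
      rwa [measure_ball_eq_of_norm_eq hrot (x := y) (y := x) (by simpa [hx] using hts hy)]
  have hsphere : μ (sphere (0 : E) 1) = 0 := measure_mono_null hcover hnull
  exact NeZero.ne μ (Measure.measure_univ_eq_zero.mp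
    (by rw [← Set.union_compl_self (sphere (0 : E) 1)]; exact measure_union_null hsphere hsupp))

lemma integral_comp_inner_smul_mem_span (hrot : ∀ e : E ≃ₗᵢ[ℝ] E, μ.map e = μ)
    (φ : ℝ → ℝ) (g : E) : ∫ u, φ ⟪g, u⟫ • u ∂μ ∈ ℝ ∙ g := by
  set v := ∫ u, φ ⟪g, u⟫ • u ∂μ
  rw [← Submodule.orthogonal_orthogonal (ℝ ∙ g), Submodule.mem_orthogonal]
  intro x hx
  rw [Submodule.mem_orthogonal_singleton_iff_inner_right] at hx
  set e := (ℝ ∙ x)ᗮ.reflection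
  have heg : e g = g := Submodule.reflection_mem_subspace_eq_self
    (Submodule.mem_orthogonal_singleton_iff_inner_left.mpr hx)
  have hinv : ∀ u, ⟪g, e u⟫ = ⟪g, u⟫ := fun u => by
    rw [← e.inner_map_map g u, heg]
  have hev : e v = v := calc
    e v = ∫ u, e (φ ⟪g, u⟫ • u) ∂μ := (e.toContinuousLinearEquiv.integral_comp_comm _).symm
    _ = ∫ u, φ ⟪g, e u⟫ • e u ∂μ := by simp only [e.map_smul, hinv]
    _ = ∫ u, φ ⟪g, u⟫ • u ∂(μ.map e) :=
      (integral_map_equiv e.toMeasurableEquiv (fun u => φ ⟪g, u⟫ • u)).symm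
    _ = v := by rw [hrot]
  have hex : e x = -x := Submodule.reflection_orthogonalComplement_singleton_eq_neg x
  have hxv : ⟪x, v⟫ = -⟪x, v⟫ := calc
    ⟪x, v⟫ = ⟪e x, e v⟫ := (e.inner_map_map x v).symm
    _ = -⟪x, v⟫ := by rw [hex, hev, inner_neg_left]
  linarith

end RotationInvariant

section LinearMargin

variable {d : ℕ} {μ : Measure (EuclideanSpace ℝ (Fin d))} {M : EuclideanSpace ℝ (Fin d) → ℝ}
  {g : EuclideanSpace ℝ (Fin d)} {b : ℝ}

lemma measurable_Phi (hM : Measurable M) : Measurable (Phi M) :=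
  Measurable.ite (measurableSet_lt measurable_const hM) measurable_const measurable_const

lemma integrable_Phi_smul [IsFiniteMeasure μ] (hsupp : μ (sphere 0 1)ᶜ = 0) (hM : Measurable M)
    (z : EuclideanSpace ℝ (Fin d)) (c : ℝ) : Integrable (fun u => Phi M (z + c • u) • u) μ := by
  refine (integrable_const (1 : ℝ)).mono' ?_ ?_
  · exact (((measurable_Phi hM).comp (measurable_const_add z |>.comp
      (measurable_const_smul c))).smul measurable_id).aestronglyMeasurable
  · have hsphere : ∀ᵐ u ∂μ, u ∈ sphere (0 : EuclideanSpace ℝ (Fin d)) 1 := hsupp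
    filter_upwards [hsphere] with u hu
    rw [mem_sphere_zero_iff_norm] at hu
    unfold Phi
    split_ifs <;> simp [hu]

lemma map_add_smul_of_affine (hM : ∀ x, M x = ⟪g, x⟫ + b) (z u : EuclideanSpace ℝ (Fin d))
    (c : ℝ) : M (z + c • u) = M z + c * ⟪g, u⟫ := by
  rw [hM, hM, inner_add_right, real_inner_smul_right]
  ring

lemma gradEst_mem_span (hrot : ∀ e : EuclideanSpace ℝ (Fin d) ≃ₗᵢ[ℝ] EuclideanSpace ℝ (Fin d),
      μ.map e = μ) (hM : ∀ x, M x = ⟪g, x⟫ + b) (z : EuclideanSpace ℝ (Fin d)) (δ R : ℝ) :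
    gradEst μ M z δ R ∈ ℝ ∙ g := by
  unfold gradEst
  simp only [Phi, map_add_smul_of_affine hM]
  exact integral_comp_inner_smul_mem_span hrot
    (fun t => if 0 < M z + δ * R * t then 0 else -1) g

lemma inner_gradEst_pos [IsFiniteMeasure μ] [NeZero μ] (hsupp : μ (sphere 0 1)ᶜ = 0)
    (hrot : ∀ e : EuclideanSpace ℝ (Fin d) ≃ₗᵢ[ℝ] EuclideanSpace ℝ (Fin d), μ.map e = μ)
    (hM : ∀ x, M x = ⟪g, x⟫ + b) {z : EuclideanSpace ℝ (Fin d)} (hz : 0 < M z) {δ R : ℝ}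
    (hR : M z < δ * R * ‖g‖) : 0 < ⟪gradEst μ M z δ R, g⟫ := by
  set c := δ * R
  have hc : 0 < c := pos_of_mul_pos_left (hz.trans hR) (norm_nonneg g)
  have hMc : Continuous M := by
    rw [show M = fun x => ⟪g, x⟫ + b from funext hM]
    fun_prop
  have hint := integrable_Phi_smul hsupp hMc.measurable z c
  rw [real_inner_comm, gradEst, ← integral_inner hint]
  simp only [real_inner_smul_right]
  have hnonneg : ∀ u, 0 ≤ Phi M (z + c • u) * ⟪g, u⟫ := fun u => by
    unfold Phi
    rw [map_add_smul_of_affine hM]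
    split_ifs with h
    · simp
    · nlinarith
  have hint' : Integrable (fun u => Phi M (z + c • u) * ⟪g, u⟫) μ := by
    simpa only [real_inner_smul_right] using hint.const_inner (𝕜 := ℝ) g
  rw [integral_pos_iff_support_of_nonneg hnonneg hint']
  have hg : 0 < ‖g‖ := pos_of_mul_pos_right (hz.trans hR) hc.le
  have hw : ‖-(‖g‖⁻¹ • g)‖ = 1 := by
    rw [norm_neg, norm_smul, norm_inv, norm_norm, inv_mul_cancel₀ hg.ne']
  have hMw : M (z + c • -(‖g‖⁻¹ • g)) < 0 := by
    rw [map_add_smul_of_affine hM, inner_neg_right, real_inner_smul_right,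
      real_inner_self_eq_norm_sq]
    field_simp
    linarith
  refine (measure_pos_of_isOpen_of_mem_sphere hsupp hrot (U := {u | M (z + c • u) < 0})
    (isOpen_lt (by fun_prop) continuous_const) hMw hw).trans_le (measure_mono fun u hu => ?_)
  have hu : M z + c * ⟪g, u⟫ < 0 := by rwa [← map_add_smul_of_affine hM]
  have hgu : ⟪g, u⟫ < 0 := by nlinarith
  simp only [Function.mem_support, Phi, map_add_smul_of_affine hM, if_neg hu.not_gt]
  linarith

end LinearMargin

theorem brepmi_linear_asymptotically_unbiased_general {d : ℕ}
    (μ : Measure (EuclideanSpace ℝ (Fin d))) [IsProbabilityMeasure μ]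
    (hsupp : μ (sphere (0 : EuclideanSpace ℝ (Fin d)) 1)ᶜ = 0)
    (hrot : ∀ e : EuclideanSpace ℝ (Fin d) ≃ₗᵢ[ℝ] EuclideanSpace ℝ (Fin d),
      μ.map e = μ)
    (g : EuclideanSpace ℝ (Fin d)) (b : ℝ) (hg : g ≠ 0)
    (M : EuclideanSpace ℝ (Fin d) → ℝ) (hM : ∀ x, M x = ⟪g, x⟫ + b)
    (z : EuclideanSpace ℝ (Fin d)) (hz : 0 < M z)
    (δ : ℝ) (hδ : δ ∈ Set.Ioo (0 : ℝ) 1) :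
    Tendsto (fun R : ℝ => ⟪gradEst μ M z δ R, g⟫ / (‖gradEst μ M z δ R‖ * ‖g‖))
        atTop (nhds 1) ∧
      ∀ᶠ R in atTop, gradEst μ M z δ R ≠ 0 := by
  have hδg : 0 < δ * ‖g‖ := mul_pos hδ.1 (norm_pos_iff.mpr hg)
  have hpos : ∀ᶠ R in atTop, 0 < ⟪gradEst μ M z δ R, g⟫ := by
    filter_upwards [eventually_gt_atTop (M z / (δ * ‖g‖))] with R hR
    refine inner_gradEst_pos hsupp hrot hM hz ?_
    linarith [(div_lt_iff₀ hδg).mp hR]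
  refine ⟨tendsto_const_nhds.congr' ?_, hpos.mono fun R hR h0 => by simp [h0] at hR⟩
  filter_upwards [hpos] with R hR
  exact (inner_div_norm_mul_norm_eq_one_of_mem_span (gradEst_mem_span hrot hM z δ R) hR).symm

/-- Theorem 1, asymptotic unbiasedness. For a linear (affine) margin
`M(x) = ⟪g, x⟫ + b` with `g ≠ 0`, a point `z` with `M(z) > 0` and `δ ∈ (0,1)`, the cosine of
the angle between the expected gradient estimator `v(R)` and `g` tends to `1` as `R → ∞`,
and `v(R) ≠ 0` for all sufficiently large `R`. -/
theorem brepmi_linear_asymptotically_unbiased {d : ℕ} (hd : 2 ≤ d)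
    (μ : Measure (EuclideanSpace ℝ (Fin d))) [IsProbabilityMeasure μ]
    (hsupp : μ (sphere (0 : EuclideanSpace ℝ (Fin d)) 1)ᶜ = 0)
    (hrot : ∀ e : EuclideanSpace ℝ (Fin d) ≃ₗᵢ[ℝ] EuclideanSpace ℝ (Fin d),
      μ.map e = μ)
    (g : EuclideanSpace ℝ (Fin d)) (b : ℝ) (hg : g ≠ 0)
    (M : EuclideanSpace ℝ (Fin d) → ℝ) (hM : ∀ x, M x = ⟪g, x⟫ + b)
    (z : EuclideanSpace ℝ (Fin d)) (hz : 0 < M z)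
    (δ : ℝ) (hδ : δ ∈ Set.Ioo (0 : ℝ) 1) :
    Tendsto (fun R : ℝ => ⟪gradEst μ M z δ R, g⟫ / (‖gradEst μ M z δ R‖ * ‖g‖))
        atTop (nhds 1) ∧
      ∀ᶠ R in atTop, gradEst μ M z δ R ≠ 0 :=
  brepmi_linear_asymptotically_unbiased_general μ hsupp hrot g b hg M hM z hz δ hδ

end
end

section
/- Let M : ℝ^d → ℝ be differentiable, let z ∈ ℝ^d with M(z) > 0, let δ ∈ (0,1), R > 0 and L > 0, and suppose the gradient map x ↦ ∇M(x) is L-Lipschitz on the closed ball of radius δR centered at z. Set w := M(z)/(δR) + (1/2)·L·δ·R. Then for every unit vector u ∈ ℝ^d with ⟨∇M(z), u⟩ > w, one has M(z + δR·u) > 0; in particular Φ(z + δR·u) = 0. (Upper-cap sign determination, Eqs. (23)–(24) of the nonlinear analysis.) -/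
/-!
By the descent lemma for a function with `L`-Lipschitz gradient on a convex set,
`M (z + t u) ≥ M z + t ⟪∇M z, u⟫ - L t² / 2` for `t = δR`. The cap condition says
`t ⟪∇M z, u⟫ > M z + L t² / 2`, so `M (z + t u) > 2 M z > 0`.
-/

open Metric
open scoped RealInnerProductSpace NNReal

noncomputable section

section DescentLemma

variable {F : Type*} [NormedAddCommGroup F] [InnerProductSpace ℝ F]

theorem LipschitzOnWith.inner_sub_le {g : F → F} {K : ℝ≥0} {s : Set F}
    (hg : LipschitzOnWith K g s) {a b : F} (ha : a ∈ s) (hb : b ∈ s) (v : F) :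
    ⟪g a - g b, v⟫ ≤ K * dist a b * ‖v‖ := by
  calc ⟪g a - g b, v⟫ ≤ dist (g a) (g b) * ‖v‖ := by
        rw [dist_eq_norm]; exact real_inner_le_norm _ _
    _ ≤ K * dist a b * ‖v‖ := by gcongr; exact hg.dist_le_mul a ha b hb

variable [CompleteSpace F] {f : F → ℝ}

theorem hasDerivAt_comp_add_smul {x v : F} {t : ℝ} (hf : DifferentiableAt ℝ f (x + t • v)) :
    HasDerivAt (fun s : ℝ => f (x + s • v)) ⟪gradient f (x + t • v), v⟫ t := by
  have hline : HasDerivAt (fun s : ℝ => x + s • v) v t := by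
    simpa using ((hasDerivAt_id t).smul_const v).const_add x
  simpa [InnerProductSpace.toDual_apply_apply, Function.comp_def] using
    hf.hasGradientAt.hasFDerivAt.comp_hasDerivAt t hline

theorem Convex.add_inner_gradient_sub_le_of_lipschitzOnWith {K : ℝ≥0} {s : Set F} (hs : Convex ℝ s)
    (hf : ∀ p ∈ s, DifferentiableAt ℝ f p) (hlip : LipschitzOnWith K (gradient f) s)
    {x y : F} (hx : x ∈ s) (hy : y ∈ s) :
    f x + ⟪gradient f x, y - x⟫ - K / 2 * ‖y - x‖ ^ 2 ≤ f y := by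
  set v := y - x with hv
  have hseg : ∀ t ∈ Set.Icc (0 : ℝ) 1, x + t • v ∈ s := fun t ht => hs.add_smul_sub_mem hx hy ht
  -- `g` has derivative `⟪∇f(x + t v) - ∇f x, v⟫ + K t ‖v‖²`, which is `≥ 0` by the Lipschitz bound.
  set g : ℝ → ℝ := fun t => f (x + t • v) - t * ⟪gradient f x, v⟫ + K * ‖v‖ ^ 2 * t ^ 2 / 2
  have hg : ∀ t ∈ Set.Icc (0 : ℝ) 1, HasDerivAt g
      (⟪gradient f (x + t • v), v⟫ - ⟪gradient f x, v⟫ + K * ‖v‖ ^ 2 * t) t := by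
    intro t ht
    have hquad : HasDerivAt (fun t : ℝ => K * ‖v‖ ^ 2 * t ^ 2 / 2) (K * ‖v‖ ^ 2 * t) t := by
      refine (((hasDerivAt_pow 2 t).const_mul (K * ‖v‖ ^ 2)).div_const 2).congr_deriv ?_
      ring
    exact ((hasDerivAt_comp_add_smul (hf _ (hseg t ht))).sub
      ((hasDerivAt_id t).mul_const _) |>.congr_deriv (by simp)).add hquad
  have hmono : MonotoneOn g (Set.Icc 0 1) := by
    refine monotoneOn_of_hasDerivWithinAt_nonneg (convex_Icc 0 1)
      (fun t ht => (hg t ht).continuousAt.continuousWithinAt)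
      (fun t ht => (hg t (interior_subset ht)).hasDerivWithinAt) fun t ht => ?_
    rw [interior_Icc] at ht
    have hdist : dist x (x + t • v) = t * ‖v‖ := by
      rw [dist_eq_norm, sub_add_cancel_left, norm_neg, norm_smul, Real.norm_of_nonneg ht.1.le]
    have hbound := hlip.inner_sub_le hx (hseg t (Set.Ioo_subset_Icc_self ht)) v
    rw [hdist, inner_sub_left] at hbound
    nlinarith
  have := hmono (Set.left_mem_Icc.2 zero_le_one) (Set.right_mem_Icc.2 zero_le_one) zero_le_one
  simp only [g, zero_smul, add_zero, zero_mul, sub_zero, one_smul, one_mul, hv,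
    add_sub_cancel] at this
  linarith

end DescentLemma

theorem brepmi_upper_cap_nonlinear_general {d : ℕ}
    (M : EuclideanSpace ℝ (Fin d) → ℝ) (hMdiff : Differentiable ℝ M)
    (z : EuclideanSpace ℝ (Fin d)) (hz : 0 < M z)
    (δ : ℝ) (hδ : δ ∈ Set.Ioo (0 : ℝ) 1) (R : ℝ) (hR : 0 < R)
    (L : ℝ) (hL : 0 < L)
    (hlip : LipschitzOnWith (Real.toNNReal L) (gradient M) (closedBall z (δ * R)))
    (w : ℝ) (hw : w = M z / (δ * R) + (1 / 2) * L * δ * R)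
    (u : EuclideanSpace ℝ (Fin d)) (hu : ‖u‖ = 1) (hcap : ⟪gradient M z, u⟫ > w) :
    0 < M (z + (δ * R) • u) ∧ Phi M (z + (δ * R) • u) = 0 := by
  set t := δ * R
  have ht : 0 < t := mul_pos hδ.1 hR
  have hstep : z + t • u ∈ closedBall z t := by
    simp [norm_smul, hu, abs_of_pos ht]
  have hdescent := (convex_closedBall z t).add_inner_gradient_sub_le_of_lipschitzOnWith
    (fun p _ => hMdiff p) hlip (mem_closedBall_self ht.le) hstep
  rw [Real.coe_toNNReal L hL.le, add_sub_cancel_left, norm_smul, hu, real_inner_smul_right,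
    Real.norm_of_nonneg ht.le] at hdescent
  have hcap' : M z + L * t ^ 2 / 2 < t * ⟪gradient M z, u⟫ := by
    have := mul_lt_mul_of_pos_left (hw ▸ hcap) ht
    rwa [mul_add, mul_div_cancel₀ _ ht.ne', show t * (1 / 2 * L * δ * R) = L * t ^ 2 / 2 by ring]
      at this
  have hpos : 0 < M (z + t • u) := by linarith
  exact ⟨hpos, by simp [Phi, hpos]⟩

/-- upper-cap sign determination, Eqs. (23)–(24), nonlinear analysis.
Let `M` be differentiable with `M(z) > 0`, `δ ∈ (0,1)`, `R > 0`, `L > 0`, and suppose the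
gradient `∇M` is `L`-Lipschitz on the closed ball of radius `δR` around `z`. With
`w := M(z)/(δR) + (1/2)·L·δ·R`, every unit vector `u` with `⟪∇M(z), u⟫ > w` satisfies
`M(z + δR·u) > 0`, and in particular `Φ(z + δR·u) = 0`. -/
theorem brepmi_upper_cap_nonlinear {d : ℕ} (hd : 1 ≤ d)
    (M : EuclideanSpace ℝ (Fin d) → ℝ) (hMdiff : Differentiable ℝ M)
    (z : EuclideanSpace ℝ (Fin d)) (hz : 0 < M z)
    (δ : ℝ) (hδ : δ ∈ Set.Ioo (0 : ℝ) 1) (R : ℝ) (hR : 0 < R)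
    (L : ℝ) (hL : 0 < L)
    (hlip : LipschitzOnWith (Real.toNNReal L) (gradient M) (closedBall z (δ * R)))
    (w : ℝ) (hw : w = M z / (δ * R) + (1 / 2) * L * δ * R)
    (u : EuclideanSpace ℝ (Fin d)) (hu : ‖u‖ = 1) (hcap : ⟪gradient M z, u⟫ > w) :
    0 < M (z + (δ * R) • u) ∧ Phi M (z + (δ * R) • u) = 0 :=
  brepmi_upper_cap_nonlinear_general M hMdiff z hz δ hδ R hR L hL hlip w hw u hu hcap

end
end

section
/- Let v ∈ ℝ^d be a unit vector, let c ≥ 0, and let Ψ : S^{d-1} → {0, −1} be a measurable function such that Ψ(u) = 0 whenever ⟨v,u⟩ > c and Ψ(u) = −1 whenever ⟨v,u⟩ < −c. Then ⟨∫_{S^{d-1}} Ψ(u)·u dμ(u), v⟩ ≥ ∫_{{u : ⟨v,u⟩ < −c}} |⟨v,u⟩| dμ(u) − c·μ({u : |⟨v,u⟩| ≤ c}). (Lower bound on the component of the expected estimator along the gradient direction.) -/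
open MeasureTheory Metric
open scoped RealInnerProductSpace

/-! Moving the inner product inside the integral turns the left side into `∫ Ψ(u)⟪v,u⟫ dμ`.
On the unit sphere `Ψ(u)⟪v,u⟫` vanishes where `⟪v,u⟫ > c`, equals `|⟪v,u⟫|` where `⟪v,u⟫ < -c`,
and is at least `-c` in between since `|Ψ| ≤ 1`; integrating this pointwise bound gives the
claim. -/

theorem indicator_lt_neg_abs_add_indicator_abs_le_le_mul {ψ t c : ℝ} (hψ : ψ = 0 ∨ ψ = -1)
    (hup : c < t → ψ = 0) (hlo : t < -c → ψ = -1) :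
    {s : ℝ | s < -c}.indicator (fun s => |s|) t + {s : ℝ | |s| ≤ c}.indicator (fun _ => -c) t ≤
      ψ * t := by
  simp only [Set.indicator_apply, Set.mem_ofPred_eq]
  split_ifs <;> rcases hψ with rfl | rfl <;> cases abs_cases t <;> grind

theorem inner_integral_smul_self {E : Type*} [NormedAddCommGroup E] [InnerProductSpace ℝ E]
    [CompleteSpace E] [MeasurableSpace E] {μ : Measure E} {Ψ : E → ℝ}
    (hΨ : Integrable (fun u => Ψ u • u) μ) (v : E) :
    ⟪∫ u, Ψ u • u ∂μ, v⟫ = ∫ u, Ψ u * ⟪v, u⟫ ∂μ := by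
  rw [real_inner_comm, ← integral_inner hΨ]
  simp only [real_inner_smul_right]

theorem setIntegral_abs_inner_sub_le_inner_integral_smul {E : Type*} [NormedAddCommGroup E]
    [InnerProductSpace ℝ E] [CompleteSpace E] [MeasurableSpace E] [BorelSpace E]
    [SecondCountableTopology E] {μ : Measure E} [IsFiniteMeasure μ] (hμ : ∀ᵐ u ∂μ, ‖u‖ = 1)
    (v : E) (c : ℝ) {Ψ : E → ℝ} (hΨmeas : Measurable Ψ) (hΨrange : ∀ u, Ψ u = 0 ∨ Ψ u = -1)
    (hΨupper : ∀ u : E, ‖u‖ = 1 → ⟪v, u⟫ > c → Ψ u = 0)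
    (hΨlower : ∀ u : E, ‖u‖ = 1 → ⟪v, u⟫ < -c → Ψ u = -1) :
    (∫ u in {u : E | ⟪v, u⟫ < -c}, |⟪v, u⟫| ∂μ) - c * μ.real {u : E | |⟪v, u⟫| ≤ c} ≤
      ⟪∫ u, Ψ u • u ∂μ, v⟫ := by
  have hid : Integrable (fun u => u) μ :=
    .of_bound aestronglyMeasurable_id 1 (hμ.mono fun _ hu => hu.le)
  have hint : Integrable (fun u => Ψ u • u) μ :=
    hid.bdd_smul 1 hΨmeas.aestronglyMeasurable
      (.of_forall fun u => by rcases hΨrange u with h | h <;> simp [h])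
  have hcont : Continuous fun u : E => ⟪v, u⟫ := continuous_const.inner continuous_id
  have hmA : MeasurableSet {u : E | ⟪v, u⟫ < -c} :=
    measurableSet_lt hcont.measurable measurable_const
  have hmB : MeasurableSet {u : E | |⟪v, u⟫| ≤ c} :=
    measurableSet_le hcont.measurable.abs measurable_const
  have hAint : Integrable ({u : E | ⟪v, u⟫ < -c}.indicator fun u => |⟪v, u⟫|) μ :=
    (hid.const_inner v).abs.indicator hmA
  have hBint := (integrable_const (-c)).indicator (μ := μ) hmB
  calc (∫ u in {u : E | ⟪v, u⟫ < -c}, |⟪v, u⟫| ∂μ) - c * μ.real {u : E | |⟪v, u⟫| ≤ c}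
      = ∫ u, ({u : E | ⟪v, u⟫ < -c}.indicator (fun u => |⟪v, u⟫|) u +
          {u : E | |⟪v, u⟫| ≤ c}.indicator (fun _ => -c) u) ∂μ := by
        rw [integral_add hAint hBint, integral_indicator hmA, integral_indicator hmB,
          setIntegral_const, smul_eq_mul]
        ring
    _ ≤ ∫ u, Ψ u * ⟪v, u⟫ ∂μ := by
        refine integral_mono_ae (hAint.add hBint) ?_ ?_
        · simpa only [real_inner_smul_right] using hint.const_inner (𝕜 := ℝ) v
        · filter_upwards [hμ] with u hu
          exact indicator_lt_neg_abs_add_indicator_abs_le_le_mul (hΨrange u)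
            (hΨupper u hu) (hΨlower u hu)
    _ = ⟪∫ u, Ψ u • u ∂μ, v⟫ := (inner_integral_smul_self hint v).symm

theorem brepmi_estimator_component_lower_bound_general {d : ℕ}
    (μ : Measure (EuclideanSpace ℝ (Fin d))) [IsProbabilityMeasure μ]
    (hsupp : μ (sphere (0 : EuclideanSpace ℝ (Fin d)) 1)ᶜ = 0)
    (v : EuclideanSpace ℝ (Fin d)) (c : ℝ)
    (Ψ : EuclideanSpace ℝ (Fin d) → ℝ) (hΨmeas : Measurable Ψ)
    (hΨrange : ∀ u, Ψ u = 0 ∨ Ψ u = -1)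
    (hΨupper : ∀ u : EuclideanSpace ℝ (Fin d), ‖u‖ = 1 → ⟪v, u⟫ > c → Ψ u = 0)
    (hΨlower : ∀ u : EuclideanSpace ℝ (Fin d), ‖u‖ = 1 → ⟪v, u⟫ < -c → Ψ u = -1) :
    ⟪∫ u, Ψ u • u ∂μ, v⟫ ≥
      (∫ u in {u : EuclideanSpace ℝ (Fin d) | ⟪v, u⟫ < -c}, |⟪v, u⟫| ∂μ) -
        c * (μ {u : EuclideanSpace ℝ (Fin d) | |⟪v, u⟫| ≤ c}).toReal := by
  have hμ : ∀ᵐ u ∂μ, ‖u‖ = 1 := by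
    filter_upwards [mem_ae_iff.mpr hsupp] with u hu using mem_sphere_zero_iff_norm.mp hu
  exact setIntegral_abs_inner_sub_le_inner_integral_smul hμ v c hΨmeas hΨrange hΨupper hΨlower

/-- lower bound on the gradient-direction component of the expected
estimator. Let `μ` be the uniform (rotation-invariant) probability measure on the unit
sphere of `ℝ^d`, `v` a unit vector, `c ≥ 0`, and `Ψ` a measurable `{0,−1}`-valued function
on the sphere with `Ψ(u) = 0` when `⟪v,u⟫ > c` and `Ψ(u) = −1` when `⟪v,u⟫ < −c`. Then
`⟪∫ Ψ(u)·u dμ(u), v⟫ ≥ ∫_{⟪v,u⟫ < −c} |⟪v,u⟫| dμ − c·μ({|⟪v,u⟫| ≤ c})`. -/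
theorem brepmi_estimator_component_lower_bound {d : ℕ} (hd : 2 ≤ d)
    (μ : Measure (EuclideanSpace ℝ (Fin d))) [IsProbabilityMeasure μ]
    (hsupp : μ (sphere (0 : EuclideanSpace ℝ (Fin d)) 1)ᶜ = 0)
    (hrot : ∀ e : EuclideanSpace ℝ (Fin d) ≃ₗᵢ[ℝ] EuclideanSpace ℝ (Fin d),
      μ.map e = μ)
    (v : EuclideanSpace ℝ (Fin d)) (hv : ‖v‖ = 1) (c : ℝ) (hc : 0 ≤ c)
    (Ψ : EuclideanSpace ℝ (Fin d) → ℝ) (hΨmeas : Measurable Ψ)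
    (hΨrange : ∀ u, Ψ u = 0 ∨ Ψ u = -1)
    (hΨupper : ∀ u : EuclideanSpace ℝ (Fin d), ‖u‖ = 1 → ⟪v, u⟫ > c → Ψ u = 0)
    (hΨlower : ∀ u : EuclideanSpace ℝ (Fin d), ‖u‖ = 1 → ⟪v, u⟫ < -c → Ψ u = -1) :
    ⟪∫ u, Ψ u • u ∂μ, v⟫ ≥
      (∫ u in {u : EuclideanSpace ℝ (Fin d) | ⟪v, u⟫ < -c}, |⟪v, u⟫| ∂μ) -
        c * (μ {u : EuclideanSpace ℝ (Fin d) | |⟪v, u⟫| ≤ c}).toReal :=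
  brepmi_estimator_component_lower_bound_general μ hsupp v c Ψ hΨmeas hΨrange hΨupper hΨlower
end

section
/- Let v ∈ ℝ^d be a unit vector, let c ≥ 0, and let Ψ : S^{d-1} → {0, −1} be a measurable function such that Ψ(u) = 0 whenever ⟨v,u⟩ > c and Ψ(u) = −1 whenever ⟨v,u⟩ < −c. Then for every unit vector w ∈ ℝ^d with ⟨v, w⟩ = 0, one has |⟨∫_{S^{d-1}} Ψ(u)·u dμ(u), w⟩| ≤ μ({u ∈ S^{d-1} : |⟨v,u⟩| ≤ c}). (The components of the expected estimator orthogonal to the gradient direction are controlled by the annulus probability.) -/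
open MeasureTheory Metric
open scoped RealInnerProductSpace

/-!
Pair `u` with its mirror image in the hyperplane `w^⊥`. This reflection fixes `v`, hence preserves
each cap `{⟪v, u⟫ < -c}` and `{⟪v, u⟫ > c}`, and flips the sign of `⟪w, u⟫`; as `μ` is invariant
under it, `⟪w, u⟫` integrates to zero over each cap. On the upper cap `Ψ = 0` and on the lower cap
`Ψ = -1`, so only the annulus `{|⟪v, u⟫| ≤ c}` contributes to `⟪∫ Ψ(u) u dμ, w⟫`, and there the
integrand `Ψ(u) ⟪w, u⟫` has absolute value at most `1`.
-/

theorem Submodule.inner_reflection_right {𝕜 E : Type*} [RCLike 𝕜] [NormedAddCommGroup E]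
    [InnerProductSpace 𝕜 E] (K : Submodule 𝕜 E) [K.HasOrthogonalProjection] (x y : E) :
    inner 𝕜 x (K.reflection y) = inner 𝕜 (K.reflection x) y := by
  rw [← K.reflection.inner_map_map, Submodule.reflection_reflection]

theorem MeasureTheory.MeasurePreserving.integral_eq_zero_of_comp_eq_neg {α F : Type*}
    [MeasurableSpace α] [NormedAddCommGroup F] [NormedSpace ℝ F] {μ : Measure α} {e : α ≃ᵐ α}
    (he : MeasurePreserving e μ μ) {f : α → F} (hf : ∀ x, f (e x) = -f x) :
    ∫ x, f x ∂μ = 0 := by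
  have : IsAddTorsionFree F := .of_isTorsionFree ℝ F
  simp_rw [← self_eq_neg, ← integral_neg, ← hf, he.integral_comp']

theorem ite_abs_le_zero_eq_ite_lt_neg_mul {c t x y : ℝ} (hup : c < t → x = 0)
    (hlow : t < -c → x = -1) :
    (if |t| ≤ c then 0 else x * y) = (if t < -c then -1 else 0) * y := by
  by_cases ht : |t| ≤ c
  · simp [ht, not_lt.2 (neg_le_of_abs_le ht)]
  by_cases hlt : t < -c
  · simp [ht, hlt, hlow hlt]
  · have hct : c < t := by cases abs_cases t <;> linarith
    simp [ht, hlt, hup hct]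

section Reflection

variable {E : Type*} [NormedAddCommGroup E] [InnerProductSpace ℝ E] [MeasurableSpace E]
  [BorelSpace E] {μ : Measure E} {v w : E}

theorem integral_comp_inner_mul_inner_eq_zero (hμ : μ.map (ℝ ∙ w)ᗮ.reflection = μ)
    (hvw : ⟪v, w⟫ = 0) (φ : ℝ → ℝ) : ∫ u, φ ⟪v, u⟫ * ⟪w, u⟫ ∂μ = 0 := by
  set R := (ℝ ∙ w)ᗮ.reflection
  have hRv : R v = v := Submodule.reflection_mem_subspace_eq_self <|
    Submodule.mem_orthogonal_singleton_iff_inner_right.mpr (real_inner_comm v w ▸ hvw)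
  have hRw : R w = -w := Submodule.reflection_orthogonalComplement_singleton_eq_neg w
  refine MeasurePreserving.integral_eq_zero_of_comp_eq_neg
    (e := R.toHomeomorph.toMeasurableEquiv) ⟨R.continuous.measurable, hμ⟩ fun u => ?_
  change φ ⟪v, R u⟫ * ⟪w, R u⟫ = -(φ ⟪v, u⟫ * ⟪w, u⟫)
  rw [Submodule.inner_reflection_right, Submodule.inner_reflection_right, hRv, hRw,
    inner_neg_left, mul_neg]

theorem integral_mul_inner_eq_setIntegral_abs_inner_le (hμ : μ.map (ℝ ∙ w)ᗮ.reflection = μ)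
    (hvw : ⟪v, w⟫ = 0) {c : ℝ} {Ψ : E → ℝ} (hint : Integrable (fun u => Ψ u * ⟪w, u⟫) μ)
    (hΨ : ∀ᵐ u ∂μ, (c < ⟪v, u⟫ → Ψ u = 0) ∧ (⟪v, u⟫ < -c → Ψ u = -1)) :
    ∫ u, Ψ u * ⟪w, u⟫ ∂μ = ∫ u in {u | |⟪v, u⟫| ≤ c}, Ψ u * ⟪w, u⟫ ∂μ := by
  have hA : MeasurableSet {u : E | |⟪v, u⟫| ≤ c} := measurableSet_le (by fun_prop) measurable_const
  have hcaps : {u | |⟪v, u⟫| ≤ c}ᶜ.indicator (fun u => Ψ u * ⟪w, u⟫) =ᵐ[μ]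
      fun u => (if ⟪v, u⟫ < -c then -1 else 0) * ⟪w, u⟫ := by
    filter_upwards [hΨ] with u ⟨hup, hlow⟩
    simp only [Set.indicator_apply, Set.mem_compl_iff, Set.mem_ofPred_eq, ite_not]
    exact ite_abs_le_zero_eq_ite_lt_neg_mul hup hlow
  have hlower_cap : ∫ u, (if ⟪v, u⟫ < -c then -1 else 0) * ⟪w, u⟫ ∂μ = 0 :=
    integral_comp_inner_mul_inner_eq_zero hμ hvw fun t => if t < -c then -1 else 0
  rw [← integral_add_compl hA hint, ← integral_indicator hA.compl, integral_congr_ae hcaps,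
    hlower_cap, add_zero]

end Reflection

theorem brepmi_estimator_orthogonal_component_bound_general {d : ℕ}
    (μ : Measure (EuclideanSpace ℝ (Fin d))) [IsProbabilityMeasure μ]
    (hsupp : μ (sphere (0 : EuclideanSpace ℝ (Fin d)) 1)ᶜ = 0)
    (hrot : ∀ e : EuclideanSpace ℝ (Fin d) ≃ₗᵢ[ℝ] EuclideanSpace ℝ (Fin d),
      μ.map e = μ)
    (v : EuclideanSpace ℝ (Fin d)) (c : ℝ)
    (Ψ : EuclideanSpace ℝ (Fin d) → ℝ) (hΨmeas : Measurable Ψ)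
    (hΨrange : ∀ u, Ψ u = 0 ∨ Ψ u = -1)
    (hΨupper : ∀ u : EuclideanSpace ℝ (Fin d), ‖u‖ = 1 → ⟪v, u⟫ > c → Ψ u = 0)
    (hΨlower : ∀ u : EuclideanSpace ℝ (Fin d), ‖u‖ = 1 → ⟪v, u⟫ < -c → Ψ u = -1)
    (w : EuclideanSpace ℝ (Fin d)) (hw : ‖w‖ = 1) (hvw : ⟪v, w⟫ = 0) :
    |⟪∫ u, Ψ u • u ∂μ, w⟫| ≤
      (μ {u : EuclideanSpace ℝ (Fin d) | |⟪v, u⟫| ≤ c}).toReal := by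
  have hunit : ∀ᵐ u ∂μ, ‖u‖ = 1 := by
    filter_upwards [mem_ae_iff.2 hsupp] with u hu using mem_sphere_zero_iff_norm.1 hu
  have hΨ_norm (u) : ‖Ψ u‖ ≤ 1 := by rcases hΨrange u with h | h <;> simp [h]
  have hint : Integrable (fun u => Ψ u • u) μ := by
    refine (integrable_const (1 : ℝ)).mono' (by fun_prop) ?_
    filter_upwards [hunit] with u hu
    simpa [norm_smul, hu] using hΨ_norm u
  have hbound : ∀ᵐ u ∂μ, ‖Ψ u * ⟪w, u⟫‖ ≤ 1 := by
    filter_upwards [hunit] with u hu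
    have hwu : ‖⟪w, u⟫‖ ≤ 1 := (abs_real_inner_le_norm w u).trans_eq (by rw [hw, hu, one_mul])
    simpa using mul_le_one₀ (hΨ_norm u) (norm_nonneg _) hwu
  have hint_w : Integrable (fun u => Ψ u * ⟪w, u⟫) μ := by
    simpa only [real_inner_smul_right] using hint.const_inner (𝕜 := ℝ) w
  calc |⟪∫ u, Ψ u • u ∂μ, w⟫| = ‖∫ u, Ψ u * ⟪w, u⟫ ∂μ‖ := by
        rw [real_inner_comm w, ← integral_inner hint]
        simp only [real_inner_smul_right, Real.norm_eq_abs]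
    _ = ‖∫ u in {u | |⟪v, u⟫| ≤ c}, Ψ u * ⟪w, u⟫ ∂μ‖ := by
        rw [integral_mul_inner_eq_setIntegral_abs_inner_le (hrot _) hvw hint_w]
        filter_upwards [hunit] with u hu using ⟨hΨupper u hu, hΨlower u hu⟩
    _ ≤ 1 * μ.real {u | |⟪v, u⟫| ≤ c} :=
        norm_setIntegral_le_of_norm_le_const_ae' (measure_lt_top _ _) (hbound.mono fun _ h _ => h)
    _ = (μ {u | |⟪v, u⟫| ≤ c}).toReal := by rw [one_mul, measureReal_def]

/-- orthogonal components of the expected estimator are controlled by the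
annulus probability. Let `μ` be the uniform (rotation-invariant) probability measure on the
unit sphere of `ℝ^d`, `v` a unit vector, `c ≥ 0`, and `Ψ` a measurable `{0,−1}`-valued
function on the sphere with `Ψ(u) = 0` when `⟪v,u⟫ > c` and `Ψ(u) = −1` when `⟪v,u⟫ < −c`.
Then for every unit vector `w ⊥ v`,
`|⟪∫ Ψ(u)·u dμ(u), w⟫| ≤ μ({u : |⟪v,u⟫| ≤ c})`. -/
theorem brepmi_estimator_orthogonal_component_bound {d : ℕ} (hd : 2 ≤ d)
    (μ : Measure (EuclideanSpace ℝ (Fin d))) [IsProbabilityMeasure μ]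
    (hsupp : μ (sphere (0 : EuclideanSpace ℝ (Fin d)) 1)ᶜ = 0)
    (hrot : ∀ e : EuclideanSpace ℝ (Fin d) ≃ₗᵢ[ℝ] EuclideanSpace ℝ (Fin d),
      μ.map e = μ)
    (v : EuclideanSpace ℝ (Fin d)) (hv : ‖v‖ = 1) (c : ℝ) (hc : 0 ≤ c)
    (Ψ : EuclideanSpace ℝ (Fin d) → ℝ) (hΨmeas : Measurable Ψ)
    (hΨrange : ∀ u, Ψ u = 0 ∨ Ψ u = -1)
    (hΨupper : ∀ u : EuclideanSpace ℝ (Fin d), ‖u‖ = 1 → ⟪v, u⟫ > c → Ψ u = 0)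
    (hΨlower : ∀ u : EuclideanSpace ℝ (Fin d), ‖u‖ = 1 → ⟪v, u⟫ < -c → Ψ u = -1)
    (w : EuclideanSpace ℝ (Fin d)) (hw : ‖w‖ = 1) (hvw : ⟪v, w⟫ = 0) :
    |⟪∫ u, Ψ u • u ∂μ, w⟫| ≤
      (μ {u : EuclideanSpace ℝ (Fin d) | |⟪v, u⟫| ≤ c}).toReal :=
  brepmi_estimator_orthogonal_component_bound_general μ hsupp hrot v c Ψ hΨmeas hΨrange hΨupper
    hΨlower w hw hvw
end

section
/- Let v ∈ ℝ^d be a unit vector, let c ≥ 0 with c ≤ 1, and let Ψ : S^{d-1} → {0, −1} be a measurable function such that Ψ(u) = 0 whenever ⟨v,u⟩ > c and Ψ(u) = −1 whenever ⟨v,u⟩ < −c. Then ‖∫_{S^{d-1}} Ψ(u)·u dμ(u) − (1/2)·(∫_{S^{d-1}} |⟨v,u⟩| dμ(u))·v‖ ≤ 2·μ({u ∈ S^{d-1} : |⟨v,u⟩| ≤ c}). (The key decomposition bound, Eq. (18) of the proof in corrected form: the expected boundary-repulsion estimator deviates from a fixed positive multiple of the gradient direction by at most twice the annulus probability.) -/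
open MeasureTheory Metric
open scoped RealInnerProductSpace

/-!
Compare `Ψ` with the threshold-zero estimator `Ψ₀ u = (sign ⟪v, u⟫ - 1) / 2`. Both take values
in `[-1, 0]` and they agree off the annulus `|⟪v, u⟫| ≤ c`, so, since `‖u‖ = 1` a.e.,
`‖∫ (Ψ - Ψ₀) u dμ‖ ≤ μ(annulus)`. The mean of `Ψ₀` is computed exactly by symmetry: `∫ u dμ = 0`
by invariance under `u ↦ -u`, and `∫ sign ⟪v, u⟫ u dμ` is fixed by the reflection in the line
`ℝ v`, hence equals its projection `(∫ |⟪v, u⟫| dμ) v`.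
-/

theorem measurable_sign_cast : Measurable fun t : ℝ => (SignType.sign t : ℝ) := by
  refine Monotone.measurable fun a b hab => ?_
  rcases lt_trichotomy a 0 with ha | rfl | ha <;>
    rcases lt_trichotomy b 0 with hb | rfl | hb <;>
    simp [sign_neg, sign_pos, *] <;> linarith

theorem abs_sign_cast_le_one (t : ℝ) : |(SignType.sign t : ℝ)| ≤ 1 := by
  rcases lt_trichotomy t 0 with ht | rfl | ht <;> simp [sign_neg, sign_pos, *]

theorem abs_sub_sign_sub_one_div_two_le {c t p : ℝ} (hc : 0 ≤ c) (hp : p = 0 ∨ p = -1)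
    (hpos : c < t → p = 0) (hneg : t < -c → p = -1) :
    |p - (SignType.sign t - 1) / 2| ≤ if |t| ≤ c then 1 else 0 := by
  split_ifs with ht
  · have hs := abs_le.1 (abs_sign_cast_le_one t)
    rcases hp with rfl | rfl <;> exact abs_le.2 ⟨by linarith, by linarith⟩
  · rcases lt_or_gt_of_ne (fun h : t = 0 => ht (by rwa [h, abs_zero])) with htneg | htpos
    · have htc : t < -c := by cases abs_cases t <;> linarith
      norm_num [hneg htc, sign_neg htneg]
    · have htc : c < t := by cases abs_cases t <;> linarith
      norm_num [hpos htc, sign_pos htpos]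

theorem inner_reflection_span_singleton_right {E : Type*} [NormedAddCommGroup E]
    [InnerProductSpace ℝ E] (v u : E) : ⟪v, (ℝ ∙ v).reflection u⟫ = ⟪v, u⟫ := by
  have h := (ℝ ∙ v).reflection.inner_map_map v u
  rwa [(ℝ ∙ v).reflection_mem_subspace_eq_self (Submodule.mem_span_singleton_self v)] at h

section

variable {E : Type*} [NormedAddCommGroup E] [InnerProductSpace ℝ E] [MeasurableSpace E]
  {μ : Measure E}

theorem integrable_smul_self (hid : Integrable (fun u : E => u) μ) {g : E → ℝ}
    (hg : AEStronglyMeasurable g μ) (hg1 : ∀ u, |g u| ≤ 1) :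
    Integrable (fun u => g u • u) μ :=
  hid.bdd_smul 1 hg (.of_forall hg1)

theorem norm_integral_smul_self_le_measureReal [IsFiniteMeasure μ] {g : E → ℝ} {s : Set E}
    (hs : MeasurableSet s) (hμ : ∀ᵐ u ∂μ, ‖u‖ ≤ 1) (hg : ∀ᵐ u ∂μ, |g u| ≤ s.indicator 1 u) :
    ‖∫ u, g u • u ∂μ‖ ≤ μ.real s := by
  rw [← integral_indicator_one hs]
  refine norm_integral_le_of_norm_le ((integrable_const 1).indicator hs) ?_
  filter_upwards [hμ, hg] with u hu hgu
  rw [norm_smul, Real.norm_eq_abs]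
  calc |g u| * ‖u‖ ≤ s.indicator 1 u * 1 :=
        mul_le_mul hgu hu (norm_nonneg u) ((abs_nonneg _).trans hgu)
    _ = s.indicator 1 u := mul_one _

variable [BorelSpace E]

theorem integrable_sign_inner_smul_self {v : E} (hid : Integrable (fun u : E => u) μ) :
    Integrable (fun u => (SignType.sign ⟪v, u⟫ : ℝ) • u) μ :=
  integrable_smul_self hid
    (measurable_sign_cast.comp
      (continuous_const.inner continuous_id).measurable).aestronglyMeasurable
    fun _ => abs_sign_cast_le_one _

theorem integrable_sign_sub_one_div_two_inner_smul_self {v : E}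
    (hid : Integrable (fun u : E => u) μ) :
    Integrable (fun u => ((SignType.sign ⟪v, u⟫ - 1) / 2 : ℝ) • u) μ :=
  (((integrable_sign_inner_smul_self hid).sub hid).smul (1 / 2 : ℝ)).congr
    (.of_forall fun u => by simp only [Pi.smul_apply, Pi.sub_apply]; module)

theorem integral_id_eq_zero_of_measurePreserving_neg
    (hμ : MeasurePreserving (fun u : E => -u) μ μ) : ∫ u, u ∂μ = 0 := by
  have h : ∫ u, -u ∂μ = ∫ u, u ∂μ :=
    hμ.integral_comp (Homeomorph.neg E).measurableEmbedding id
  rw [integral_neg, neg_eq_iff_add_eq_zero, ← two_smul ℝ] at h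
  exact (smul_eq_zero.1 h).resolve_left two_ne_zero

variable [CompleteSpace E]

theorem integral_smul_self_eq_inner_smul {v : E} (hv : ‖v‖ = 1)
    (hμ : MeasurePreserving (ℝ ∙ v).reflection μ μ) {g : E → ℝ}
    (hg : ∀ u, g ((ℝ ∙ v).reflection u) = g u) :
    ∫ u, g u • u ∂μ = ⟪v, ∫ u, g u • u ∂μ⟫ • v := by
  set w := ∫ u, g u • u ∂μ
  have hw : (ℝ ∙ v).reflection w = w := calc
    (ℝ ∙ v).reflection w = ∫ u, g ((ℝ ∙ v).reflection u) • (ℝ ∙ v).reflection u ∂μ := by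
      simp_rw [hg, ← LinearIsometryEquiv.map_smul]
      exact ((ℝ ∙ v).reflection.toLinearIsometry.integral_comp_comm _).symm
    _ = w := hμ.integral_comp (ℝ ∙ v).reflection.toHomeomorph.measurableEmbedding
      fun u => g u • u
  rw [← Submodule.starProjection_unit_singleton ℝ hv, eq_comm, Submodule.starProjection_eq_self_iff]
  exact (Submodule.reflection_eq_self_iff w).1 hw

theorem integral_sign_inner_smul_self {v : E} (hv : ‖v‖ = 1)
    (hμ : MeasurePreserving (ℝ ∙ v).reflection μ μ) (hid : Integrable (fun u : E => u) μ) :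
    ∫ u, (SignType.sign ⟪v, u⟫ : ℝ) • u ∂μ = (∫ u, |⟪v, u⟫| ∂μ) • v := by
  rw [integral_smul_self_eq_inner_smul hv hμ fun u => by rw [inner_reflection_span_singleton_right],
    ← integral_inner (integrable_sign_inner_smul_self hid)]
  simp_rw [real_inner_smul_right, sign_mul_self]

theorem integral_sign_sub_one_div_two_inner_smul_self {v : E} (hv : ‖v‖ = 1)
    (hneg : MeasurePreserving (fun u : E => -u) μ μ)
    (hrefl : MeasurePreserving (ℝ ∙ v).reflection μ μ) (hid : Integrable (fun u : E => u) μ) :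
    ∫ u, ((SignType.sign ⟪v, u⟫ - 1) / 2 : ℝ) • u ∂μ = ((1 / 2) * ∫ u, |⟪v, u⟫| ∂μ) • v := by
  calc ∫ u, ((SignType.sign ⟪v, u⟫ - 1) / 2 : ℝ) • u ∂μ
      = ∫ u, ((1 / 2 : ℝ) • ((SignType.sign ⟪v, u⟫ : ℝ) • u) - (1 / 2 : ℝ) • u) ∂μ :=
        integral_congr_ae (.of_forall fun u => by module)
    _ = (1 / 2 : ℝ) • ∫ u, (SignType.sign ⟪v, u⟫ : ℝ) • u ∂μ - (1 / 2 : ℝ) • ∫ u, u ∂μ := by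
        rw [integral_sub, integral_smul, integral_smul]
        exacts [(integrable_sign_inner_smul_self hid).smul _, hid.smul _]
    _ = ((1 / 2) * ∫ u, |⟪v, u⟫| ∂μ) • v := by
        rw [integral_sign_inner_smul_self hv hrefl hid,
          integral_id_eq_zero_of_measurePreserving_neg hneg, smul_zero, sub_zero, smul_smul]

end

theorem brepmi_estimator_decomposition_bound_general {d : ℕ}
    (μ : Measure (EuclideanSpace ℝ (Fin d))) [IsProbabilityMeasure μ]
    (hsupp : μ (sphere (0 : EuclideanSpace ℝ (Fin d)) 1)ᶜ = 0)
    (hrot : ∀ e : EuclideanSpace ℝ (Fin d) ≃ₗᵢ[ℝ] EuclideanSpace ℝ (Fin d),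
      μ.map e = μ)
    (v : EuclideanSpace ℝ (Fin d)) (hv : ‖v‖ = 1)
    (c : ℝ) (hc : 0 ≤ c)
    (Ψ : EuclideanSpace ℝ (Fin d) → ℝ) (hΨmeas : Measurable Ψ)
    (hΨrange : ∀ u, Ψ u = 0 ∨ Ψ u = -1)
    (hΨupper : ∀ u : EuclideanSpace ℝ (Fin d), ‖u‖ = 1 → ⟪v, u⟫ > c → Ψ u = 0)
    (hΨlower : ∀ u : EuclideanSpace ℝ (Fin d), ‖u‖ = 1 → ⟪v, u⟫ < -c → Ψ u = -1) :
    ‖(∫ u, Ψ u • u ∂μ) - ((1 / 2) * ∫ u, |⟪v, u⟫| ∂μ) • v‖ ≤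
      2 * (μ {u : EuclideanSpace ℝ (Fin d) | |⟪v, u⟫| ≤ c}).toReal := by
  have hsphere : ∀ᵐ u ∂μ, ‖u‖ = 1 := by
    filter_upwards [mem_ae_iff.2 hsupp] with u hu using mem_sphere_zero_iff_norm.1 hu
  have hball : ∀ᵐ u ∂μ, ‖u‖ ≤ 1 := hsphere.mono fun _ hu => hu.le
  have hid : Integrable (fun u => u) μ := .of_bound aestronglyMeasurable_id 1 hball
  have hΨint : Integrable (fun u => Ψ u • u) μ :=
    integrable_smul_self hid hΨmeas.aestronglyMeasurable fun u => by
      rcases hΨrange u with h | h <;> norm_num [h]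
  have hS : MeasurableSet {u : EuclideanSpace ℝ (Fin d) | |⟪v, u⟫| ≤ c} :=
    measurableSet_le (continuous_const.inner continuous_id).abs.measurable measurable_const
  rw [← integral_sign_sub_one_div_two_inner_smul_self hv
      ⟨continuous_neg.measurable, by simpa using hrot (LinearIsometryEquiv.neg ℝ)⟩
      ⟨(ℝ ∙ v).reflection.continuous.measurable, hrot _⟩ hid,
    ← integral_sub hΨint (integrable_sign_sub_one_div_two_inner_smul_self hid)]
  simp_rw [← sub_smul]
  refine (norm_integral_smul_self_le_measureReal hS hball ?_).trans ?_
  · filter_upwards [hsphere] with u hu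
    simpa [Set.indicator_apply] using
      abs_sub_sign_sub_one_div_two_le hc (hΨrange u) (hΨupper u hu) (hΨlower u hu)
  · rw [measureReal_def]
    exact le_mul_of_one_le_left ENNReal.toReal_nonneg one_le_two

/-- key decomposition bound, Eq. (18) in corrected form. Let `μ` be the
uniform (rotation-invariant) probability measure on the unit sphere of `ℝ^d`, `v` a unit
vector, `0 ≤ c ≤ 1`, and `Ψ` a measurable `{0,−1}`-valued function on the sphere with
`Ψ(u) = 0` when `⟪v,u⟫ > c` and `Ψ(u) = −1` when `⟪v,u⟫ < −c`. Then the expected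
boundary-repulsion estimator deviates from the fixed positive multiple
`(1/2)·(∫ |⟪v,u⟫| dμ)·v` of the gradient direction by at most twice the annulus
probability: `‖∫ Ψ(u)·u dμ − (1/2)·(∫ |⟪v,u⟫| dμ)·v‖ ≤ 2·μ({u : |⟪v,u⟫| ≤ c})`. -/
theorem brepmi_estimator_decomposition_bound {d : ℕ} (hd : 2 ≤ d)
    (μ : Measure (EuclideanSpace ℝ (Fin d))) [IsProbabilityMeasure μ]
    (hsupp : μ (sphere (0 : EuclideanSpace ℝ (Fin d)) 1)ᶜ = 0)
    (hrot : ∀ e : EuclideanSpace ℝ (Fin d) ≃ₗᵢ[ℝ] EuclideanSpace ℝ (Fin d),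
      μ.map e = μ)
    (v : EuclideanSpace ℝ (Fin d)) (hv : ‖v‖ = 1)
    (c : ℝ) (hc : 0 ≤ c) (hc1 : c ≤ 1)
    (Ψ : EuclideanSpace ℝ (Fin d) → ℝ) (hΨmeas : Measurable Ψ)
    (hΨrange : ∀ u, Ψ u = 0 ∨ Ψ u = -1)
    (hΨupper : ∀ u : EuclideanSpace ℝ (Fin d), ‖u‖ = 1 → ⟪v, u⟫ > c → Ψ u = 0)
    (hΨlower : ∀ u : EuclideanSpace ℝ (Fin d), ‖u‖ = 1 → ⟪v, u⟫ < -c → Ψ u = -1) :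
    ‖(∫ u, Ψ u • u ∂μ) - ((1 / 2) * ∫ u, |⟪v, u⟫| ∂μ) • v‖ ≤
      2 * (μ {u : EuclideanSpace ℝ (Fin d) | |⟪v, u⟫| ≤ c}).toReal :=
  brepmi_estimator_decomposition_bound_general μ hsupp hrot v hv c hc Ψ hΨmeas hΨrange hΨupper
    hΨlower
end
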